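/- Let E be a finite-dimensional real inner product space, let r ≥ 2, and let B be a symmetric E-valued r×r array, i.e. vectors B_{ij} ∈ E for 1 ≤ i, j ≤ r with B_{ij} = B_{ji}. Set H = ∑_{i=1}^r B_{ii} and ‖B‖² = ∑_{i,j=1}^r ‖B_{ij}‖². Then ⟨B_{11}, H⟩ − ∑_{j=1}^r ‖B_{1j}‖² ≥ ((r−1)/r²)·( 2‖H‖² − r·‖B‖² − (r−2)·‖H‖·√((r·‖B‖² − ‖H‖²)/(r−1)) ). -/
import Mathlib


open scoped RealInnerProductSpace

section
set_option linter.unusedSectionVars false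

lemma hineva_scalar_core (R x u h s P Q : ℝ) (hR : 2 ≤ R) (hh : 0 ≤ h) (hs : 0 ≤ s)
    (hP : 0 ≤ P) (hQk : h ^ 2 - 2 * x + u ≤ (R - 1) * Q)
    (hcs : x ^ 2 ≤ u * h ^ 2)
    (hD : (R - 1) * s ^ 2 = R * (u + 2 * P + Q) - h ^ 2) :
    (R - 1) / R ^ 2 * (2 * h ^ 2 - R * (u + 2 * P + Q) - (R - 2) * h * s) ≤ x - u - P := by
  have hR0 : (0:ℝ) < R := by linarith
  have hn0 : (0:ℝ) < R - 1 := by linarith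
  have hPP : 0 ≤ 2 * (R - 1) * P := by positivity
  have hC : 0 ≤ (R - 1) ^ 2 * s ^ 2 - h ^ 2 + 2 * R * x - R ^ 2 * u := by
    have hid : (R - 1) ^ 2 * s ^ 2 - h ^ 2 + 2 * R * x - R ^ 2 * u
        = R * (2 * (R - 1) * P + ((R - 1) * Q - (h ^ 2 - 2 * x + u))) := by
      linear_combination (R - 1) * hD
    rw [hid]
    have : 0 ≤ 2 * (R - 1) * P + ((R - 1) * Q - (h ^ 2 - 2 * x + u)) := by linarith
    positivity
  have hns0 : 0 ≤ h * ((R - 1) * s) := mul_nonneg hh (mul_nonneg hn0.le hs)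
  have hsq : (h ^ 2 - R * x) ^ 2 ≤ (h * ((R - 1) * s)) ^ 2 := by
    nlinarith [mul_nonneg (sq_nonneg h) hC, mul_le_mul_of_nonneg_left hcs (sq_nonneg R)]
  have key2 : h ^ 2 - R * x ≤ h * ((R - 1) * s) := by nlinarith [hsq, hns0]
  rw [← sub_nonneg]
  have hid2 : x - u - P -
      (R - 1) / R ^ 2 * (2 * h ^ 2 - R * (u + 2 * P + Q) - (R - 2) * h * s)
      = ((R - 2) * R * (2 * (R - 1) * P + ((R - 1) * Q - (h ^ 2 - 2 * x + u)))
          + 2 * (R - 1) * ((R - 2) * (R * x + h * ((R - 1) * s) - h ^ 2))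
          + R ^ 2 * ((R - 1) * Q - (h ^ 2 - 2 * x + u))) / (2 * (R - 1) * R ^ 2) := by
    field_simp
    ring
  rw [hid2]
  apply div_nonneg _ (by positivity)
  have t1 : 0 ≤ (R - 2) * R * (2 * (R - 1) * P + ((R - 1) * Q - (h ^ 2 - 2 * x + u))) :=
    mul_nonneg (by nlinarith) (by linarith)
  have t2 : 0 ≤ 2 * (R - 1) * ((R - 2) * (R * x + h * ((R - 1) * s) - h ^ 2)) :=
    mul_nonneg (by linarith) (mul_nonneg (by linarith) (by linarith))
  have t3 : 0 ≤ R ^ 2 * ((R - 1) * Q - (h ^ 2 - 2 * x + u)) :=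
    mul_nonneg (sq_nonneg R) (by linarith)
  linarith

variable {E : Type*} [NormedAddCommGroup E] [InnerProductSpace ℝ E]

lemma norm_sum_sq_le_card {ι : Type*} (t : Finset ι) (v : ι → E) :
    ‖∑ i ∈ t, v i‖ ^ 2 ≤ (t.card : ℝ) * ∑ i ∈ t, ‖v i‖ ^ 2 := by
  calc ‖∑ i ∈ t, v i‖ ^ 2 ≤ (∑ i ∈ t, ‖v i‖) ^ 2 := by
        nlinarith [norm_nonneg (∑ i ∈ t, v i), norm_sum_le t v]
    _ ≤ (t.card : ℝ) * ∑ i ∈ t, ‖v i‖ ^ 2 :=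
        sq_sum_le_card_mul_sum_sq (s := t) (f := fun i => ‖v i‖)

lemma hineva_aux (r : ℕ) (hr : 2 ≤ r) (B : Fin r → Fin r → E)
    (hB : ∀ i j, B i j = B j i)
    (H : E) (hH : H = ∑ i, B i i)
    (b : ℝ) (hb : b = ∑ i, ∑ j, ‖B i j‖ ^ 2) (e : Fin r) :
    ⟪B e e, H⟫ - ∑ j, ‖B e j‖ ^ 2 ≥
      ((r : ℝ) - 1) / (r : ℝ) ^ 2 *
        (2 * ‖H‖ ^ 2 - (r : ℝ) * b -
          ((r : ℝ) - 2) * ‖H‖ *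
            Real.sqrt (((r : ℝ) * b - ‖H‖ ^ 2) / ((r : ℝ) - 1))) := by
  have hR : (2:ℝ) ≤ (r:ℝ) := by exact_mod_cast hr
  have hn0 : (0:ℝ) < (r:ℝ) - 1 := by linarith
  set t : Finset (Fin r) := Finset.univ.erase e with ht
  have hcard : (t.card : ℝ) = (r:ℝ) - 1 := by
    rw [ht, Finset.card_erase_of_mem (Finset.mem_univ e)]
    simp only [Finset.card_univ, Fintype.card_fin]
    have : (1:ℕ) ≤ r := by omega
    push_cast [Nat.cast_sub this]
    ring
  -- split the first-row sum
  have f1 : ∑ j, ‖B e j‖ ^ 2 = ‖B e e‖ ^ 2 + ∑ j ∈ t, ‖B e j‖ ^ 2 :=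
    (Finset.add_sum_erase Finset.univ (fun j => ‖B e j‖ ^ 2) (Finset.mem_univ e)).symm
  set P : ℝ := ∑ j ∈ t, ‖B e j‖ ^ 2 with hPdef
  set Q : ℝ := ∑ i ∈ t, ∑ j ∈ t, ‖B i j‖ ^ 2 with hQdef
  have hP : 0 ≤ P := Finset.sum_nonneg fun j _ => sq_nonneg _
  -- split b
  have f2 : b = ‖B e e‖ ^ 2 + 2 * P + Q := by
    rw [hb, ← Finset.add_sum_erase Finset.univ (fun i => ∑ j, ‖B i j‖ ^ 2) (Finset.mem_univ e)]
    have inner_split : ∀ i : Fin r, (∑ j, ‖B i j‖ ^ 2) = ‖B i e‖ ^ 2 + ∑ j ∈ t, ‖B i j‖ ^ 2 :=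
      fun i => (Finset.add_sum_erase Finset.univ (fun j => ‖B i j‖ ^ 2) (Finset.mem_univ e)).symm
    rw [inner_split e, Finset.sum_congr rfl (fun i _ => inner_split i), Finset.sum_add_distrib]
    have hsym : ∑ i ∈ t, ‖B i e‖ ^ 2 = P := by
      rw [hPdef]
      exact Finset.sum_congr rfl fun i _ => by rw [hB]
    rw [hsym]
    ring
  -- H decomposition
  have hHsplit : H - B e e = ∑ i ∈ t, B i i := by
    rw [hH, ← Finset.add_sum_erase Finset.univ (fun i => B i i) (Finset.mem_univ e)]
    abel
  have hk : ‖H - B e e‖ ^ 2 = ‖H‖ ^ 2 - 2 * ⟪B e e, H⟫ + ‖B e e‖ ^ 2 := by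
    rw [norm_sub_sq_real, real_inner_comm]
  have f5 : ∑ i ∈ t, ‖B i i‖ ^ 2 ≤ Q :=
    Finset.sum_le_sum fun i hi =>
      Finset.single_le_sum (fun j _ => sq_nonneg ‖B i j‖) hi
  have hQk : ‖H‖ ^ 2 - 2 * ⟪B e e, H⟫ + ‖B e e‖ ^ 2 ≤ ((r:ℝ) - 1) * Q := by
    rw [← hk, hHsplit]
    calc ‖∑ i ∈ t, B i i‖ ^ 2 ≤ (t.card : ℝ) * ∑ i ∈ t, ‖B i i‖ ^ 2 :=
          norm_sum_sq_le_card t _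
      _ = ((r:ℝ) - 1) * ∑ i ∈ t, ‖B i i‖ ^ 2 := by rw [hcard]
      _ ≤ ((r:ℝ) - 1) * Q := by
          exact mul_le_mul_of_nonneg_left f5 (by linarith)
  have hcs : ⟪B e e, H⟫ ^ 2 ≤ ‖B e e‖ ^ 2 * ‖H‖ ^ 2 := by
    have h1 := abs_real_inner_le_norm (B e e) H
    nlinarith [abs_nonneg ⟪B e e, H⟫, sq_abs ⟪B e e, H⟫]
  -- r*b ≥ ‖H‖²
  have f7 : ‖H‖ ^ 2 ≤ (r:ℝ) * b := by
    have h6 : ∑ i, ‖B i i‖ ^ 2 ≤ b := by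
      rw [hb]
      exact Finset.sum_le_sum fun i _ =>
        Finset.single_le_sum (fun j _ => sq_nonneg ‖B i j‖) (Finset.mem_univ i)
    have h7 : ‖H‖ ^ 2 ≤ (r:ℝ) * ∑ i, ‖B i i‖ ^ 2 := by
      rw [hH]
      have := norm_sum_sq_le_card Finset.univ (fun i : Fin r => B i i)
      simpa [Finset.card_univ] using this
    calc ‖H‖ ^ 2 ≤ (r:ℝ) * ∑ i, ‖B i i‖ ^ 2 := h7
      _ ≤ (r:ℝ) * b := mul_le_mul_of_nonneg_left h6 (by linarith)
  set s : ℝ := Real.sqrt (((r:ℝ) * b - ‖H‖ ^ 2) / ((r:ℝ) - 1)) with hsdef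
  have hs : 0 ≤ s := Real.sqrt_nonneg _
  have hD : ((r:ℝ) - 1) * s ^ 2 = (r:ℝ) * (‖B e e‖ ^ 2 + 2 * P + Q) - ‖H‖ ^ 2 := by
    rw [hsdef, Real.sq_sqrt (div_nonneg (by linarith) hn0.le), ← f2]
    field_simp
  have main := hineva_scalar_core ((r:ℝ)) ⟪B e e, H⟫ (‖B e e‖ ^ 2) ‖H‖ s P Q
    hR (norm_nonneg H) hs hP hQk hcs hD
  rw [ge_iff_le, f1, f2]
  linarith [main]

end


/-- Analytic core of Theorem 6.2: for a symmetric array `B` of vectors in a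
finite-dimensional real inner product space `E`, with `H = ∑ᵢ Bᵢᵢ` and
`‖B‖² = ∑ᵢⱼ ‖Bᵢⱼ‖²`,
`⟨B₁₁, H⟩ − ∑ⱼ ‖B₁ⱼ‖² ≥ ((r−1)/r²)·(2‖H‖² − r‖B‖² − (r−2)‖H‖·√((r‖B‖² − ‖H‖²)/(r−1)))`. -/
theorem hineva_vector_valued (E : Type*) [NormedAddCommGroup E]
    [InnerProductSpace ℝ E] [FiniteDimensional ℝ E]
    (r : ℕ) (hr : 2 ≤ r) (B : Fin r → Fin r → E)
    (hB : ∀ i j, B i j = B j i)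
    (H : E) (hH : H = ∑ i, B i i)
    (b : ℝ) (hb : b = ∑ i, ∑ j, ‖B i j‖ ^ 2) :
    ⟪B ⟨0, by omega⟩ ⟨0, by omega⟩, H⟫ - ∑ j, ‖B ⟨0, by omega⟩ j‖ ^ 2 ≥
      ((r : ℝ) - 1) / (r : ℝ) ^ 2 *
        (2 * ‖H‖ ^ 2 - (r : ℝ) * b -
          ((r : ℝ) - 2) * ‖H‖ *
            Real.sqrt (((r : ℝ) * b - ‖H‖ ^ 2) / ((r : ℝ) - 1))) := by
  exact hineva_aux r hr B hB H hH b hb ⟨0, by omega⟩
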